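/- arXiv:1910.01082 — 3 statements merged into one kernel-verified Lean document; each statement's English description precedes it below -/
import Mathlib

section
/- Let G be a finite simple graph on n ≥ 2 vertices. Then G has a Hamiltonian path if and only if there exists a set E' ⊆ E(G) with |E'| = n − 1 such that the subgraph of the line graph L(G) induced by E' is acyclic (i.e., L(G) has an induced forest on n − 1 vertices). -/
/-!
If `p` is a Hamiltonian path, two of its edges share a vertex only when they are consecutive
along `p`, so indexing the edges along `p` is an injective homomorphism from the induced
subgraph of `L(G)` into the Hasse diagram of `ℕ`, which is a forest.

Conversely, let `H` be the spanning subgraph of `G` with edge set `E'`, so that `L(H)` embeds into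
the forest `L(G)[E']`. A cycle of `H` yields a cycle of `L(H)` and three edges at a vertex yield a
triangle, so `H` is a forest of maximum degree at most two. With `n - 1` edges it is a tree, and
a longest path in a connected graph of maximum degree at most two visits every vertex.
-/

namespace SimpleGraph

variable {V : Type*} {G : SimpleGraph V}

/-- Every edge `a ⋖ b` is a bridge: a walk from `a` to `b` must leave `{x | x ≤ a}` along it. -/
theorem isAcyclic_hasse {α : Type*} [LinearOrder α] : (hasse α).IsAcyclic := by
  rw [isAcyclic_iff_forall_adj_isBridge]
  intro a b hab
  wlog hlt : a ⋖ b generalizing a b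
  · simpa [Sym2.eq_swap] using this hab.symm (hab.resolve_left hlt)
  rintro ⟨p⟩
  obtain ⟨d, -, hd, hd'⟩ := p.exists_boundary_dart {x | x ≤ a} le_rfl (not_le.mpr hlt.lt)
  obtain ⟨hadj, hne⟩ := deleteEdges_adj.mp d.adj
  simp only [Set.mem_ofPred_eq, not_le] at hd hd'
  rcases hasse_adj.mp hadj with hcov | hcov
  · have hfst : d.fst = a := le_antisymm hd (not_lt.mp fun h => hcov.2 h hd')
    have hsnd : d.snd = b := (hfst ▸ hcov).unique_right hlt
    exact hne (by rw [hfst, hsnd]; rfl)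
  · exact lt_asymm hd' (hcov.lt.trans_le hd)

namespace Walk

variable {u v : V} {p : G.Walk u v}

theorem IsPath.hasse_adj_of_mem_edges_getElem (hp : p.IsPath) {i j : ℕ}
    (hi : i < p.edges.length) (hj : j < p.edges.length) (hne : p.edges[i] ≠ p.edges[j]) {w : V}
    (hwi : w ∈ p.edges[i]) (hwj : w ∈ p.edges[j]) : (hasse ℕ).Adj i j := by
  have hij : i ≠ j := by rintro rfl; exact hne rfl
  rw [length_edges] at hi hj
  simp only [getElem_edges_eq_edge_getElem_darts, darts_getElem_eq_getVert, Dart.edge_mk,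
    Sym2.mem_iff] at hwi hwj
  have hinj {a b : ℕ} (ha : a ≤ p.length) (hb : b ≤ p.length)
      (h : p.getVert a = p.getVert b) : a = b :=
    hp.getVert_injOn ha hb h
  rw [hasse_adj, Nat.covBy_iff_add_one_eq, Nat.covBy_iff_add_one_eq]
  rcases hwi with rfl | rfl <;> rcases hwj with h | h <;>
    have := hinj (by omega) (by omega) h <;> omega

theorem IsPath.isAcyclic_induce_lineGraph (hp : p.IsPath) :
    (G.lineGraph.induce {e | e.1 ∈ p.edges}).IsAcyclic := by
  classical
  refine isAcyclic_hasse.comap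
    { toFun := fun e => p.edges.idxOf e.1.1
      map_rel' := fun {e f} hef => ?_ } fun e f h => ?_
  · obtain ⟨hne, w, hwe, hwf⟩ := lineGraph_adj_iff_exists.mp hef
    have he := List.idxOf_lt_length_iff.mpr e.2
    have hf := List.idxOf_lt_length_iff.mpr f.2
    refine hp.hasse_adj_of_mem_edges_getElem (w := w) he hf ?_ ?_ ?_ <;>
      simp only [List.getElem_idxOf]
    · exact fun h => hne (Subtype.ext h)
    · exact hwe
    · exact hwf
  · exact Subtype.ext (Subtype.ext ((List.idxOf_inj e.2).mp h))

theorem IsTrail.ncard_setOf_mem_edges (hp : p.IsTrail) :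
    {e : G.edgeSet | e.1 ∈ p.edges}.ncard = p.length := by
  classical
  rw [← Set.ncard_image_of_injective _ Subtype.val_injective]
  have : Subtype.val '' {e : G.edgeSet | e.1 ∈ p.edges} = p.edges.toFinset := by
    ext e
    simpa using fun h => p.edges_subset_edgeSet h
  rw [this, Set.ncard_coe_finset, List.toFinset_card_of_nodup hp.edges_nodup, length_edges]

theorem IsPath.mem_support_of_adj_getVert {i : ℕ} [Fintype (G.neighborSet (p.getVert i))]
    (hp : p.IsPath) (hi₀ : i ≠ 0) (hi : i < p.length) (hdeg : G.degree (p.getVert i) ≤ 2)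
    {w : V} (hw : G.Adj (p.getVert i) w) : w ∈ p.support := by
  by_contra hwp
  have hsub : insert w (p.toSubgraph.neighborSet (p.getVert i)) ⊆ G.neighborSet (p.getVert i) :=
    Set.insert_subset hw (p.toSubgraph.neighborSet_subset _)
  have hw' : w ∉ p.toSubgraph.neighborSet (p.getVert i) := fun h =>
    hwp ((mem_verts_toSubgraph p).mp (p.toSubgraph.neighborSet_subset_verts _ h))
  have hfin := (G.neighborSet (p.getVert i)).toFinite.subset (p.toSubgraph.neighborSet_subset _)
  have := Set.ncard_le_ncard hsub
  rw [Set.ncard_insert_of_notMem hw' hfin, hp.ncard_neighborSet_toSubgraph_internal_eq_two hi₀ hi,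
    ← Nat.card_coe_set_eq, Nat.card_eq_fintype_card, card_neighborSet_eq_degree] at this
  omega

end Walk

/-- The edges of a cycle `c` at `v`, in order, form a path of length `c.length - 1 ≥ 2` in `L(G)`
whose two ends contain `v` and are therefore also joined by an edge of `L(G)`. -/
theorem isAcyclic_of_isAcyclic_lineGraph (h : G.lineGraph.IsAcyclic) : G.IsAcyclic := by
  intro v c hc
  set l : List G.edgeSet := c.darts.map fun d => ⟨d.edge, d.edge_mem⟩ with hl
  have hlen : l.length = c.length := by simp [hl]
  have hget (i : ℕ) (hi : i < l.length) :
      (l[i] : Sym2 V) = s(c.getVert i, c.getVert (i + 1)) := by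
    simp [hl, Walk.darts_getElem_eq_getVert]
  have hnodup : l.Nodup := by
    refine List.Nodup.of_map Subtype.val ?_
    rw [hl, List.map_map]
    exact hc.edges_nodup
  have hne : l ≠ [] := by simpa [hl] using hc.not_nil
  have hadj {i j : ℕ} (hi : i < l.length) (hj : j < l.length) (hij : i ≠ j) {w : V}
      (hwi : w ∈ (l[i] : Sym2 V)) (hwj : w ∈ (l[j] : Sym2 V)) : G.lineGraph.Adj l[i] l[j] :=
    lineGraph_adj_iff_exists.mpr ⟨fun h => hij (hnodup.getElem_inj_iff.mp h), w, hwi, hwj⟩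
  have hchain : l.IsChain G.lineGraph.Adj := by
    rw [List.isChain_iff_getElem]
    intro i hi
    exact hadj _ _ (by omega) (w := c.getVert (i + 1)) (by simp [hget]) (by simp [hget])
  have hlen3 := hc.three_le_length
  have hends : G.lineGraph.Adj (l.head hne) (l.getLast hne) := by
    rw [List.head_eq_getElem, List.getLast_eq_getElem]
    refine hadj _ _ (by omega) (w := v) (by simp [hget]) ?_
    rw [hget, hlen, Nat.sub_add_cancel (by omega), Walk.getVert_length]
    exact Sym2.mem_mk_right _ _
  have hpath : (Walk.ofSupport l hne hchain).IsPath := .mk' (by simpa using hnodup)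
  have := congrArg (fun q => q.1.length)
    ((h.subsingleton_path _ _).elim ⟨_, hpath⟩ (Path.singleton hends))
  simp only [Walk.length_ofSupport, Path.singleton, Walk.length_cons, Walk.length_nil] at this
  omega

theorem degree_le_two_of_isAcyclic_lineGraph (h : G.lineGraph.IsAcyclic) (v : V)
    [Fintype (G.neighborSet v)] : G.degree v ≤ 2 := by
  classical
  by_contra! hlt
  rw [← card_neighborFinset_eq_degree, Finset.two_lt_card] at hlt
  obtain ⟨a, ha, b, hb, c, hc, hab, hac, hbc⟩ := hlt
  rw [mem_neighborFinset] at ha hb hc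
  have hadj {x y : V} (hx : G.Adj v x) (hy : G.Adj v y) (hxy : x ≠ y) :
      G.lineGraph.Adj ⟨s(v, x), hx⟩ ⟨s(v, y), hy⟩ :=
    lineGraph_adj_iff_exists.mpr
      ⟨fun h => hxy (Sym2.congr_right.mp (congrArg Subtype.val h)), v, by simp, by simp⟩
  refine h.cliqueFree le_rfl {⟨s(v, a), ha⟩, ⟨s(v, b), hb⟩, ⟨s(v, c), hc⟩} ?_
  exact is3Clique_triple_iff.mpr ⟨hadj ha hb hab, hadj ha hc hac, hadj hb hc hbc⟩

theorem IsAcyclic.isTree_of_card [Finite V] (h : G.IsAcyclic)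
    (hcard : Nat.card G.edgeSet + 1 = Nat.card V) : G.IsTree := by
  have : Nonempty V := (Nat.card_pos_iff.mp (by omega)).1
  obtain ⟨T, hGT, -, hT⟩ := connected_top.exists_isTree_le_of_le_of_isAcyclic le_top h
  have hTcard := (isTree_iff_connected_and_card.mp hT).2
  have : G.edgeSet = T.edgeSet := by
    refine Set.eq_of_subset_of_ncard_le (edgeSet_subset_edgeSet.mpr hGT) ?_ (Set.toFinite _)
    rw [← Nat.card_coe_set_eq, ← Nat.card_coe_set_eq]
    omega
  rwa [edgeSet_inj.mp this]

/-- A vertex missed by a longest path `p` is reached along an edge leaving `p`; that edge would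
extend `p` at an end, or give a third neighbour to an internal vertex of `p`. -/
theorem Connected.exists_isHamiltonian_of_degree_le_two [Finite V] [DecidableEq V]
    [G.LocallyFinite] (hG : G.Connected) (hdeg : ∀ v, G.degree v ≤ 2) :
    ∃ (u v : V) (p : G.Walk u v), p.IsHamiltonian := by
  classical
  have := Fintype.ofFinite V
  have : Nonempty (Σ u v, G.Path u v) := ⟨⟨hG.nonempty.some, _, Path.nil⟩⟩
  obtain ⟨⟨u, v, p, hp⟩, hmax⟩ :=
    Finite.exists_max fun q : Σ u v, G.Path u v => q.2.2.1.length
  refine ⟨u, v, p, hp.isHamiltonian_of_mem fun w => ?_⟩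
  by_contra hw
  obtain ⟨d, -, hy, hz⟩ :=
    (hG.preconnected u w).some.exists_boundary_dart {x | x ∈ p.support} p.start_mem_support hw
  simp only [Set.mem_ofPred_eq] at hy hz
  obtain ⟨i, hi, hil⟩ := Walk.mem_support_iff_exists_getVert.mp hy
  have hadj : G.Adj (p.getVert i) d.snd := hi ▸ d.adj
  rcases Nat.eq_zero_or_pos i with rfl | hi₀
  · have := hmax ⟨_, _, _, hp.cons (by simpa using hz) (h := (by simpa using hadj.symm))⟩
    simp at this
  rcases hil.lt_or_eq with hil | rfl
  · exact hz (hp.mem_support_of_adj_getVert hi₀.ne' hil (hdeg _) hadj)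
  · have := hmax ⟨_, _, _, hp.concat hz (by simpa using hadj)⟩
    simp at this

theorem exists_isHamiltonian_of_isAcyclic_lineGraph [Finite V] [DecidableEq V]
    (h : G.lineGraph.IsAcyclic) (hcard : Nat.card G.edgeSet + 1 = Nat.card V) :
    ∃ (u v : V) (p : G.Walk u v), p.IsHamiltonian := by
  classical
  have := Fintype.ofFinite V
  exact ((isAcyclic_of_isAcyclic_lineGraph h).isTree_of_card hcard).connected
    |>.exists_isHamiltonian_of_degree_le_two fun v => degree_le_two_of_isAcyclic_lineGraph h v

theorem edgeSet_fromEdgeSet_image_val (E' : Set G.edgeSet) :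
    (fromEdgeSet (Subtype.val '' E')).edgeSet = Subtype.val '' E' := by
  rw [edgeSet_fromEdgeSet, sdiff_eq_left, Set.disjoint_left]
  rintro _ ⟨e, -, rfl⟩
  exact G.not_isDiag_of_mem_edgeSet e.2

theorem fromEdgeSet_image_val_le (E' : Set G.edgeSet) : fromEdgeSet (Subtype.val '' E') ≤ G := by
  rw [← edgeSet_subset_edgeSet, edgeSet_fromEdgeSet_image_val]
  rintro _ ⟨e, -, rfl⟩
  exact e.2

theorem isAcyclic_lineGraph_fromEdgeSet_image_val {E' : Set G.edgeSet}
    (h : (G.lineGraph.induce E').IsAcyclic) :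
    (fromEdgeSet (Subtype.val '' E')).lineGraph.IsAcyclic := by
  have hmem (e : (fromEdgeSet (Subtype.val '' E')).edgeSet) :
      ⟨e.1, edgeSet_mono (fromEdgeSet_image_val_le E') e.2⟩ ∈ E' := by
    obtain ⟨x, hx, hxe⟩ := (edgeSet_fromEdgeSet_image_val E').subset e.2
    rwa [show (⟨e.1, _⟩ : G.edgeSet) = x from Subtype.ext hxe.symm]
  refine h.comap
    { toFun := fun e => ⟨⟨e.1, _⟩, hmem e⟩
      map_rel' := fun hef => ?_ } fun e f hef => ?_
  · simpa [lineGraph_adj_iff_exists, Subtype.ext_iff] using hef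
  · exact Subtype.ext (congrArg (fun x => x.1.1) hef)

theorem exists_isHamiltonian_of_isAcyclic_induce_lineGraph [Fintype V] [DecidableEq V]
    {E' : Set G.edgeSet} (hcard : E'.ncard + 1 = Fintype.card V)
    (h : (G.lineGraph.induce E').IsAcyclic) : ∃ (u v : V) (p : G.Walk u v), p.IsHamiltonian := by
  have hH : Nat.card (fromEdgeSet (Subtype.val '' E')).edgeSet + 1 = Nat.card V := by
    rw [Nat.card_coe_set_eq, edgeSet_fromEdgeSet_image_val,
      Set.ncard_image_of_injective _ Subtype.val_injective, hcard, Nat.card_eq_fintype_card]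
  obtain ⟨u, v, p, hp⟩ :=
    exists_isHamiltonian_of_isAcyclic_lineGraph (isAcyclic_lineGraph_fromEdgeSet_image_val h) hH
  exact ⟨u, v, _, hp.map (f := Hom.ofLE (fromEdgeSet_image_val_le E')) Function.bijective_id⟩

end SimpleGraph

/-- A finite simple graph `G` on `n ≥ 2` vertices has a Hamiltonian path if and
only if there exists a set `E'` of edges of `G` with `|E'| = n - 1` such that the subgraph of the
line graph `L(G)` induced by `E'` is acyclic (i.e. `L(G)` has an induced forest on `n - 1`
vertices). -/
theorem stmt4 {V : Type*} [Fintype V] [DecidableEq V] (G : SimpleGraph V)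
    (hn : 2 ≤ Fintype.card V) :
    (∃ (u v : V) (p : G.Walk u v), p.IsPath ∧ p.IsHamiltonian) ↔
      ∃ E' : Set G.edgeSet, E'.ncard = Fintype.card V - 1 ∧
        (G.lineGraph.induce E').IsAcyclic := by
  constructor
  · rintro ⟨u, v, p, hp, hham⟩
    refine ⟨{e | e.1 ∈ p.edges}, ?_, hp.isAcyclic_induce_lineGraph⟩
    rw [hp.isTrail.ncard_setOf_mem_edges, hham.length_eq]
  · rintro ⟨E', hcard, hac⟩
    obtain ⟨u, v, p, hp⟩ :=
      G.exists_isHamiltonian_of_isAcyclic_induce_lineGraph (by omega : E'.ncard + 1 = _) hac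
    exact ⟨u, v, p, hp.isPath, hp⟩
end

section
/- Let H be a finite simple graph that either contains a cycle or has a connected component containing at least two branch vertices. Let G be any finite simple graph, let s ≥ |V(H)| + 1, and let G* be the s-subdivision of G. Then G* contains no subgraph isomorphic to H; in particular, G* is H-free. -/
/-- The smaller endpoint of an unordered pair of vertices, w.r.t. a linear order. -/
def Sym2.inf' {V : Type*} [LinearOrder V] (e : Sym2 V) : V :=
  Sym2.lift ⟨fun a b => a ⊓ b, fun a b => inf_comm a b⟩ e

/-- The larger endpoint of an unordered pair of vertices, w.r.t. a linear order. -/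
def Sym2.sup' {V : Type*} [LinearOrder V] (e : Sym2 V) : V :=
  Sym2.lift ⟨fun a b => a ⊔ b, fun a b => sup_comm a b⟩ e

/-- The `s`-subdivision `G*` of `G`: every edge `uv` of `G` is replaced by a path
`u, x¹_uv, …, xˢ_uv, v` through `s` new internal vertices; the internal vertices introduced
for distinct edges are pairwise distinct.  The internal vertices of the edge `e` are the pairs
`(e, i)` for `i : Fin s`, laid out from the smaller endpoint of `e` to the larger one. -/
def SimpleGraph.subdivision {V : Type*} [LinearOrder V] (G : SimpleGraph V) (s : ℕ) :
    SimpleGraph (V ⊕ (G.edgeSet × Fin s)) :=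
  SimpleGraph.fromRel fun x y =>
    match x, y with
    | Sum.inl u, Sum.inr (e, i) =>
        (u = Sym2.inf' (e : Sym2 V) ∧ (i : ℕ) = 0) ∨
          (u = Sym2.sup' (e : Sym2 V) ∧ (i : ℕ) = s - 1)
    | Sum.inr (e, i), Sum.inr (f, j) => e = f ∧ (i : ℕ) + 1 = (j : ℕ)
    | _, _ => False

/-!
Internal vertices of `G*` have degree at most two, so an injective homomorphism `H →g G*` sends
every branch vertex of `H` to an original vertex of `G`. Distinct original vertices are at
distance at least `s + 1` in `G*`, whereas a path of `H` has fewer than `|V(H)| < s` edges.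

A cycle of `H` maps to a set of vertices of `G*` each of which has two neighbours inside the set.
Such a set contains an internal vertex, and with any internal vertex of the path replacing an
edge it contains the whole path, hence has at least `s > |V(H)|` vertices.
-/

lemma Nat.forall_lt_of_pred_succ_closed {P : ℕ → Prop} {m n : ℕ} (hm : m < n) (h : P m)
    (hdown : ∀ k, P (k + 1) → P k) (hup : ∀ k, k + 1 < n → P k → P (k + 1)) :
    ∀ j < n, P j := by
  have h0 : P 0 := by
    induction m with
    | zero => exact h
    | succ m ih => exact ih (by omega) (hdown m h)
  intro j hj
  induction j with
  | zero => exact h0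
  | succ j ih => exact hup j hj (ih (by omega))

lemma SimpleGraph.Hom.ncard_neighborSet_le {W W' : Type*} {H : SimpleGraph W}
    {H' : SimpleGraph W'} (f : H →g H') (hf : Function.Injective f) (w : W)
    (hfin : (H'.neighborSet (f w)).Finite) :
    (H.neighborSet w).ncard ≤ (H'.neighborSet (f w)).ncard := by
  rw [← Set.ncard_image_of_injective _ hf]
  exact Set.ncard_le_ncard (by rintro _ ⟨x, hx, rfl⟩; exact f.map_adj hx) hfin

def SimpleGraph.MinDegreeTwoOn {W : Type*} (H : SimpleGraph W) (S : Set W) : Prop :=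
  ∀ z ∈ S, ∃ a ∈ S, ∃ b ∈ S, a ≠ b ∧ H.Adj z a ∧ H.Adj z b

lemma SimpleGraph.MinDegreeTwoOn.image {W W' : Type*} {H : SimpleGraph W} {H' : SimpleGraph W'}
    {S : Set W} (hS : H.MinDegreeTwoOn S) (f : H →g H') (hf : Function.Injective f) :
    H'.MinDegreeTwoOn (f '' S) := by
  rintro _ ⟨w, hw, rfl⟩
  obtain ⟨x, hx, y, hy, hxy, hwx, hwy⟩ := hS w hw
  exact ⟨f x, ⟨x, hx, rfl⟩, f y, ⟨y, hy, rfl⟩, hf.ne hxy, f.map_adj hwx, f.map_adj hwy⟩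

lemma SimpleGraph.Walk.IsCycle.minDegreeTwoOn_support {W : Type*} {H : SimpleGraph W}
    {u : W} {c : H.Walk u u} (hc : c.IsCycle) : H.MinDegreeTwoOn {w | w ∈ c.support} := by
  intro w hw
  obtain ⟨x, y, hxy, hnbr⟩ := Set.ncard_eq_two.mp (hc.ncard_neighborSet_toSubgraph_eq_two hw)
  have hx : c.toSubgraph.Adj w x := by
    change x ∈ c.toSubgraph.neighborSet w
    simp [hnbr]
  have hy : c.toSubgraph.Adj w y := by
    change y ∈ c.toSubgraph.neighborSet w
    simp [hnbr]
  exact ⟨x, c.mem_verts_toSubgraph.mp hx.snd_mem, y, c.mem_verts_toSubgraph.mp hy.snd_mem,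
    hxy, hx.adj_sub, hy.adj_sub⟩

open Sum Function

namespace SimpleGraph

variable {V : Type*} [LinearOrder V] {G : SimpleGraph V} {s : ℕ}

lemma inf'_ne_sup'_of_mem_edgeSet (e : G.edgeSet) :
    Sym2.inf' (e : Sym2 V) ≠ Sym2.sup' (e : Sym2 V) := by
  obtain ⟨e, he⟩ := e
  induction e with
  | _ a b => simpa [Sym2.inf', Sym2.sup', inf_eq_sup] using (G.mem_edgeSet.mp he).ne

lemma subdivision_not_adj_inl_inl (u v : V) : ¬ (G.subdivision s).Adj (inl u) (inl v) := by
  simp [subdivision]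

lemma subdivision_adj_inl_inr {u : V} {e : G.edgeSet} {i : Fin s} :
    (G.subdivision s).Adj (inl u) (inr (e, i)) ↔
      (u = Sym2.inf' (e : Sym2 V) ∧ (i : ℕ) = 0) ∨
        (u = Sym2.sup' (e : Sym2 V) ∧ (i : ℕ) = s - 1) := by
  simp [subdivision]

lemma subdivision_adj_inr_inr {e f : G.edgeSet} {i j : Fin s} :
    (G.subdivision s).Adj (inr (e, i)) (inr (f, j)) ↔
      e = f ∧ ((i : ℕ) + 1 = j ∨ (j : ℕ) + 1 = i) := by
  simp only [subdivision, fromRel_adj, ne_eq, inr.injEq, Prod.mk.injEq, Fin.ext_iff]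
  grind

/-- The vertex at position `p` on the path `inf' e, (e, 0), …, (e, s - 1), sup' e` of `G*`
replacing the edge `e`. -/
def subdivisionVert (G : SimpleGraph V) (s : ℕ) (e : G.edgeSet) (p : ℕ) :
    V ⊕ (G.edgeSet × Fin s) :=
  if h : 0 < p ∧ p < s + 1 then inr (e, ⟨p - 1, by omega⟩)
  else if p = 0 then inl (Sym2.inf' (e : Sym2 V)) else inl (Sym2.sup' (e : Sym2 V))

lemma subdivisionVert_of_lt {e : G.edgeSet} {p : ℕ} (h0 : 0 < p) (hp : p < s + 1) :
    G.subdivisionVert s e p = inr (e, ⟨p - 1, by omega⟩) :=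
  dif_pos ⟨h0, hp⟩

lemma subdivision_neighborSet_inr_subset (e : G.edgeSet) (i : Fin s) :
    (G.subdivision s).neighborSet (inr (e, i)) ⊆
      {G.subdivisionVert s e i, G.subdivisionVert s e (i + 2)} := by
  rintro (w | ⟨f, j⟩) h <;> simp only [Set.mem_insert_iff, Set.mem_singleton_iff]
  · rw [mem_neighborSet, adj_comm, subdivision_adj_inl_inr] at h
    rcases h with ⟨rfl, h⟩ | ⟨rfl, h⟩
    · left
      simp [subdivisionVert, h]
    · right
      rw [subdivisionVert, dif_neg (by omega), if_neg (by omega)]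
  · obtain ⟨rfl, h | h⟩ := subdivision_adj_inr_inr.mp h
    · right
      rw [subdivisionVert_of_lt (by omega) (by omega)]
      simp only [inr.injEq, Prod.mk.injEq, Fin.ext_iff, true_and]
      omega
    · left
      rw [subdivisionVert_of_lt (by omega) (by omega)]
      simp only [inr.injEq, Prod.mk.injEq, Fin.ext_iff, true_and]
      omega

lemma ncard_subdivision_neighborSet_inr_le_two (x : G.edgeSet × Fin s) :
    ((G.subdivision s).neighborSet (inr x)).ncard ≤ 2 :=
  (Set.ncard_le_ncard (subdivision_neighborSet_inr_subset x.1 x.2) (Set.toFinite _)).trans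
    ((Set.ncard_insert_le _ _).trans (by simp))

lemma subdivisionVert_mem_of_inr_mem {S : Set (V ⊕ (G.edgeSet × Fin s))}
    (hS : (G.subdivision s).MinDegreeTwoOn S)
    {e : G.edgeSet} {i : Fin s} (hi : inr (e, i) ∈ S) :
    G.subdivisionVert s e i ∈ S ∧ G.subdivisionVert s e (i + 2) ∈ S := by
  obtain ⟨a, ha, b, hb, hab, hia, hib⟩ := hS _ hi
  have hA := subdivision_neighborSet_inr_subset e i hia
  have hB := subdivision_neighborSet_inr_subset e i hib
  simp only [Set.mem_insert_iff, Set.mem_singleton_iff] at hA hB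
  rcases hA with rfl | rfl <;> rcases hB with rfl | rfl
  exacts [absurd rfl hab, ⟨ha, hb⟩, ⟨hb, ha⟩, absurd rfl hab]

lemma subdivision_inr_mem_of_inr_mem {S : Set (V ⊕ (G.edgeSet × Fin s))}
    (hS : (G.subdivision s).MinDegreeTwoOn S)
    {e : G.edgeSet} {i : Fin s} (hi : inr (e, i) ∈ S) (j : Fin s) : inr (e, j) ∈ S := by
  refine Nat.forall_lt_of_pred_succ_closed (P := fun k => ∃ hk : k < s, inr (e, ⟨k, hk⟩) ∈ S)
    i.isLt ⟨i.isLt, hi⟩ ?_ ?_ j j.isLt |>.choose_spec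
  · rintro k ⟨hk, hkS⟩
    have := (subdivisionVert_mem_of_inr_mem hS hkS).1
    rw [subdivisionVert_of_lt (by simp) (by simp; omega)] at this
    exact ⟨by omega, this⟩
  · rintro k hk ⟨hk', hkS⟩
    have := (subdivisionVert_mem_of_inr_mem hS hkS).2
    rw [subdivisionVert_of_lt (by simp) (by simp; omega)] at this
    exact ⟨hk, this⟩

lemma le_ncard_of_subdivision_minDegreeTwoOn {S : Set (V ⊕ (G.edgeSet × Fin s))}
    (hS : (G.subdivision s).MinDegreeTwoOn S)
    (hne : S.Nonempty) (hfin : S.Finite) : s ≤ S.ncard := by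
  obtain ⟨e, i, hi⟩ : ∃ e i, inr (e, i) ∈ S := by
    obtain ⟨z | ⟨e, i⟩, hz⟩ := hne
    · obtain ⟨a | ⟨e, i⟩, ha, -, -, -, hza, -⟩ := hS _ hz
      · exact absurd hza (subdivision_not_adj_inl_inl _ _)
      · exact ⟨e, i, ha⟩
    · exact ⟨e, i, hz⟩
  calc s = (Set.range fun j : Fin s => (inr (e, j) : V ⊕ (G.edgeSet × Fin s))).ncard := by
        rw [Set.ncard_range_of_injective fun j j' h => by simpa using h, Nat.card_fin]
    _ ≤ S.ncard :=
        Set.ncard_le_ncard (Set.range_subset_iff.mpr (subdivision_inr_mem_of_inr_mem hS hi)) hfin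

/-- `min (dist (inl u) x) (s + 1)` in `G*`, written out explicitly. -/
def subdivisionTruncDist (G : SimpleGraph V) (s : ℕ) (u : V) : V ⊕ (G.edgeSet × Fin s) → ℕ
  | inl w => if w = u then 0 else s + 1
  | inr (e, i) =>
      if Sym2.inf' (e : Sym2 V) = u then i + 1
      else if Sym2.sup' (e : Sym2 V) = u then s - i else s + 1

lemma subdivisionTruncDist_le_of_adj (u : V) {x y : V ⊕ (G.edgeSet × Fin s)}
    (h : (G.subdivision s).Adj x y) :
    G.subdivisionTruncDist s u y ≤ G.subdivisionTruncDist s u x + 1 := by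
  rcases x with w | ⟨e, i⟩ <;> rcases y with w' | ⟨f, j⟩
  · exact absurd h (subdivision_not_adj_inl_inl _ _)
  · have := inf'_ne_sup'_of_mem_edgeSet f
    have := j.isLt
    rw [subdivision_adj_inl_inr] at h
    grind [subdivisionTruncDist]
  · have := inf'_ne_sup'_of_mem_edgeSet e
    have := i.isLt
    rw [adj_comm, subdivision_adj_inl_inr] at h
    grind [subdivisionTruncDist]
  · obtain ⟨rfl, h⟩ := subdivision_adj_inr_inr.mp h
    have := i.isLt
    have := j.isLt
    grind [subdivisionTruncDist]

lemma subdivisionTruncDist_le_add_length (u : V) {x y : V ⊕ (G.edgeSet × Fin s)}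
    (p : (G.subdivision s).Walk x y) :
    G.subdivisionTruncDist s u y ≤ G.subdivisionTruncDist s u x + p.length := by
  induction p with
  | nil => simp
  | cons h _ ih =>
    have := subdivisionTruncDist_le_of_adj u h
    rw [Walk.length_cons]
    omega

lemma subdivision_succ_le_length_of_walk_inl_inl {u v : V} (huv : u ≠ v)
    (p : (G.subdivision s).Walk (inl u) (inl v)) : s + 1 ≤ p.length := by
  have := subdivisionTruncDist_le_add_length u p
  simpa [subdivisionTruncDist, huv.symm] using this

variable {W : Type*} {H : SimpleGraph W}

lemma exists_eq_inl_of_three_le_ncard_neighborSet (f : H →g G.subdivision s) (hf : Injective f)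
    {w : W} (hw : 3 ≤ (H.neighborSet w).ncard) : ∃ w', f w = inl w' := by
  rcases hfw : f w with w' | x
  · exact ⟨w', rfl⟩
  · have hfin := (Set.toFinite _).subset (subdivision_neighborSet_inr_subset x.1 x.2)
    have := f.ncard_neighborSet_le hf w (hfw ▸ hfin)
    have := hfw ▸ ncard_subdivision_neighborSet_inr_le_two x
    omega

variable [Fintype W]

theorem not_injective_hom_subdivision_of_isCycle (hs : Fintype.card W < s)
    (f : H →g G.subdivision s) {v : W} {c : H.Walk v v} (hc : c.IsCycle) : ¬ Injective f := by
  intro hf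
  have hS := hc.minDegreeTwoOn_support.image f hf
  have hlarge := le_ncard_of_subdivision_minDegreeTwoOn hS ⟨f v, v, c.start_mem_support, rfl⟩
    (Set.toFinite _)
  have hsmall := (Set.ncard_image_le (f := f) (Set.toFinite {w | w ∈ c.support})).trans
    (Set.ncard_le_card _)
  rw [Nat.card_eq_fintype_card] at hsmall
  omega

theorem not_injective_hom_subdivision_of_reachable (hs : Fintype.card W < s)
    (f : H →g G.subdivision s) {u v : W} (huv : u ≠ v) (hr : H.Reachable u v)
    (hu : 3 ≤ (H.neighborSet u).ncard) (hv : 3 ≤ (H.neighborSet v).ncard) :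
    ¬ Injective f := by
  intro hf
  obtain ⟨u', hu'⟩ := exists_eq_inl_of_three_le_ncard_neighborSet f hf hu
  obtain ⟨v', hv'⟩ := exists_eq_inl_of_three_le_ncard_neighborSet f hf hv
  have hne : u' ≠ v' := fun h => huv (hf (by rw [hu', hv', h]))
  obtain ⟨p, hp⟩ := hr.exists_isPath
  have hlong := subdivision_succ_le_length_of_walk_inl_inl hne ((p.map f).copy hu' hv')
  have hshort := hp.length_lt
  rw [Walk.length_copy, Walk.length_map] at hlong
  omega

end SimpleGraph

theorem stmt9_general {W V : Type*} [Fintype W] [LinearOrder V]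
    (H : SimpleGraph W)
    (hH : (∃ (v : W) (c : H.Walk v v), c.IsCycle) ∨
      ∃ u v : W, u ≠ v ∧ H.Reachable u v ∧
        3 ≤ (H.neighborSet u).ncard ∧ 3 ≤ (H.neighborSet v).ncard)
    (G : SimpleGraph V) (s : ℕ) (hs : Fintype.card W + 1 ≤ s) :
    (∀ f : H →g G.subdivision s, ¬ Function.Injective f) ∧
      IsEmpty (H ↪g G.subdivision s) := by
  have key : ∀ f : H →g G.subdivision s, ¬ Function.Injective f := by
    intro f
    rcases hH with ⟨v, c, hc⟩ | ⟨u, v, huv, hr, hu, hv⟩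
    · exact SimpleGraph.not_injective_hom_subdivision_of_isCycle hs f hc
    · exact SimpleGraph.not_injective_hom_subdivision_of_reachable hs f huv hr hu hv
  exact ⟨key, ⟨fun φ => key φ.toHom φ.injective⟩⟩

/-- Let `H` be a finite simple graph that either contains a cycle or has a
connected component containing at least two branch vertices (vertices of degree at least 3).
Let `G` be any finite simple graph, let `s ≥ |V(H)| + 1`, and let `G*` be the `s`-subdivision
of `G`.  Then `G*` contains no subgraph isomorphic to `H` (there is no injective graph
homomorphism `H →g G*`); in particular `G*` is `H`-free (there is no graph embedding
`H ↪g G*`, i.e. no induced subgraph of `G*` is isomorphic to `H`). -/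
theorem stmt9 {W V : Type*} [Fintype W] [Fintype V] [LinearOrder V]
    (H : SimpleGraph W)
    (hH : (∃ (v : W) (c : H.Walk v v), c.IsCycle) ∨
      ∃ u v : W, u ≠ v ∧ H.Reachable u v ∧
        3 ≤ (H.neighborSet u).ncard ∧ 3 ≤ (H.neighborSet v).ncard)
    (G : SimpleGraph V) (s : ℕ) (hs : Fintype.card W + 1 ≤ s) :
    (∀ f : H →g G.subdivision s, ¬ Function.Injective f) ∧
      IsEmpty (H ↪g G.subdivision s) :=
  stmt9_general H hH G s hs
end

section
/- Let G be a finite simple graph with n vertices and m edges, let s ≥ 1 be an integer, and let G* be the s-subdivision of G, which has N = n + s·m vertices. Then for every integer k ≥ 0, G has an induced forest on n − k vertices if and only if G* has an induced forest on N − k vertices. -/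
/-!
Compare bridges rather than cycles, viewing induced subgraphs as graphs on the whole vertex type
(`spanningInduce`), and number the vertices of the path replacing an edge `e` as `0, …, s + 1`.

If `G[A]` is a forest, so is `G*[B]` for `B = A ∪ {all subdivision vertices}`: a walk of `G*[B]`
avoiding an edge on the path of `e₀` collapses, path by path, to a walk of `G[A]` between the two
ends of `e₀` avoiding `e₀`. Conversely, if `G*[B]` is a forest, keep the vertices `u ∈ B` whose
paths towards larger neighbours lie in `B`; a walk of `G[A]` avoiding an edge `e₀` expands to a walk
of `G*[B]` avoiding the first edge on the path of `e₀`. Each subdivision vertex missing from `B`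
excludes at most one vertex, so `|A| ≥ |B| - s·m`, and both forests shrink to the exact sizes.
-/

open Sum SimpleGraph

namespace SimpleGraph

section

variable {α β : Type*}

lemma Reachable.lift {H : SimpleGraph α} {T : SimpleGraph β} (f : α → β)
    (hf : ∀ x y, H.Adj x y → T.Reachable (f x) (f y)) {x y : α} (h : H.Reachable x y) :
    T.Reachable (f x) (f y) := by
  rw [reachable_iff_reflTransGen] at h ⊢
  exact h.lift' f fun a b hab => (reachable_iff_reflTransGen _ _).1 (hf a b hab)

lemma reachable_of_adj_succ {T : SimpleGraph α} {g : ℕ → α} {i j : ℕ} (hij : i ≤ j)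
    (h : ∀ n, i ≤ n → n < j → T.Adj (g n) (g (n + 1))) : T.Reachable (g i) (g j) := by
  induction j, hij using Nat.le_induction with
  | base => rfl
  | succ j hij ih =>
    exact (ih fun n hin hnj => h n hin (by omega)).trans (h j hij (by omega)).reachable

def spanningInduce (K : SimpleGraph α) (S : Set α) : SimpleGraph α where
  Adj x y := K.Adj x y ∧ x ∈ S ∧ y ∈ S
  symm := ⟨fun _ _ h => ⟨h.1.symm, h.2.2, h.2.1⟩⟩
  loopless := ⟨fun _ h => h.1.ne rfl⟩

variable {K : SimpleGraph α} {S : Set α}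

@[simp] lemma spanningInduce_adj {x y : α} :
    (K.spanningInduce S).Adj x y ↔ K.Adj x y ∧ x ∈ S ∧ y ∈ S := Iff.rfl

lemma mem_of_reachable_spanningInduce {a b : α} (h : (K.spanningInduce S).Reachable a b)
    (hab : a ≠ b) : a ∈ S := by
  obtain ⟨w⟩ := h
  exact (spanningInduce_adj.1 (w.adj_snd (w.not_nil_of_ne hab))).2.1

lemma isAcyclic_spanningInduce_iff :
    (K.spanningInduce S).IsAcyclic ↔ (K.induce S).IsAcyclic := by
  refine ⟨fun h => h.embedding ⟨Function.Embedding.subtype S, fun {a b} => ?_⟩, fun h => ?_⟩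
  · exact ⟨fun h => h.1, fun h => ⟨h, a.2, b.2⟩⟩
  rw [isAcyclic_iff_forall_adj_isBridge]
  intro a b hadj hr
  obtain ⟨hab, ha, hb⟩ := spanningInduce_adj.1 hadj
  classical
  -- a retraction of `α` onto `S` pulls walks back into `K.induce S`
  let ρ : α → S := fun x => if hx : x ∈ S then ⟨x, hx⟩ else ⟨a, ha⟩
  have hρ : ∀ x (hx : x ∈ S), ρ x = ⟨x, hx⟩ := fun x hx => dif_pos hx
  have hbridge := isAcyclic_iff_forall_adj_isBridge.1 h
    (show (K.induce S).Adj ⟨a, ha⟩ ⟨b, hb⟩ from hab)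
  have key : ∀ x y, ((K.spanningInduce S).deleteEdges {s(a, b)}).Adj x y →
      ((K.induce S).deleteEdges {s(⟨a, ha⟩, ⟨b, hb⟩)}).Reachable (ρ x) (ρ y) := by
    intro x y hxy
    obtain ⟨hxy, hne⟩ := deleteEdges_adj.1 hxy
    obtain ⟨hxy, hx, hy⟩ := spanningInduce_adj.1 hxy
    rw [hρ x hx, hρ y hy]
    refine Adj.reachable
      (deleteEdges_adj.2 ⟨(hxy : (K.induce S).Adj ⟨x, hx⟩ ⟨y, hy⟩), fun h' => hne ?_⟩)
    simpa using congrArg (Sym2.map Subtype.val) (Set.mem_singleton_iff.1 h')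
  exact isBridge_iff.1 hbridge (by simpa only [hρ a ha, hρ b hb] using hr.lift ρ key)

lemma IsAcyclic.not_reachable_deleteEdges (h : (K.spanningInduce S).IsAcyclic) {a b : α}
    (hab : K.Adj a b) : ¬ ((K.spanningInduce S).deleteEdges {s(a, b)}).Reachable a b := by
  intro hr
  have ha := mem_of_reachable_spanningInduce (hr.mono (deleteEdges_le _)) hab.ne
  have hb := mem_of_reachable_spanningInduce (hr.symm.mono (deleteEdges_le _)) hab.ne.symm
  have hadj : (K.spanningInduce S).Adj a b := spanningInduce_adj.2 ⟨hab, ha, hb⟩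
  exact isBridge_iff.1 (isAcyclic_iff_forall_adj_isBridge.1 h hadj) hr

lemma IsAcyclic.exists_induce_ncard_eq (h : (K.induce S).IsAcyclic) {t : ℕ} (ht : t ≤ S.ncard) :
    ∃ S' : Set α, S'.ncard = t ∧ (K.induce S').IsAcyclic := by
  obtain ⟨S', hsub, hcard⟩ := Set.exists_subset_card_eq ht
  exact ⟨S', hcard, h.embedding (K.induceHomOfLE hsub)⟩

end

end SimpleGraph

lemma Set.ncard_eq_ncard_preimage_inl_add {α β : Type*} [Finite α] [Finite β]
    (X : Set (α ⊕ β)) : X.ncard = (inl ⁻¹' X).ncard + (inr ⁻¹' X).ncard := by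
  have hX : X = inl '' (inl ⁻¹' X) ∪ inr '' (inr ⁻¹' X) := by
    ext x; cases x <;> simp
  conv_lhs => rw [hX]
  rw [Set.ncard_union_eq, Set.ncard_image_of_injective _ inl_injective,
    Set.ncard_image_of_injective _ inr_injective]
  rw [Set.disjoint_left]
  rintro _ ⟨a, -, rfl⟩ ⟨b, -, hb⟩
  cases hb

namespace Sym2

variable {V : Type*} [LinearOrder V]

lemma mk_inf'_sup' (e : Sym2 V) : s(e.inf', e.sup') = e := by
  induction e with
  | _ a b =>
    change s(a ⊓ b, a ⊔ b) = s(a, b)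
    rcases le_total a b with h | h
    · rw [inf_eq_left.mpr h, sup_eq_right.mpr h]
    · rw [inf_eq_right.mpr h, sup_eq_left.mpr h, Sym2.eq_swap]

lemma inf'_mem (e : Sym2 V) : e.inf' ∈ e := by
  simpa only [mk_inf'_sup'] using mem_mk_left e.inf' e.sup'

lemma sup'_mem (e : Sym2 V) : e.sup' ∈ e := by
  simpa only [mk_inf'_sup'] using mem_mk_right e.inf' e.sup'

end Sym2

lemma SimpleGraph.adj_inf'_sup' {V : Type*} [LinearOrder V] {G : SimpleGraph V} {e : Sym2 V}
    (he : e ∈ G.edgeSet) : G.Adj e.inf' e.sup' := by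
  rwa [← mem_edgeSet, Sym2.mk_inf'_sup']

namespace SimpleGraph

variable {V : Type*} {G : SimpleGraph V} {s : ℕ}

variable (G s) in
def subdivisionLift (A : Set V) : Set (V ⊕ (G.edgeSet × Fin s)) :=
  inl '' A ∪ Set.range inr

@[simp] lemma inl_mem_subdivisionLift {A : Set V} {u : V} :
    inl u ∈ subdivisionLift G s A ↔ u ∈ A := by
  simp [subdivisionLift]

@[simp] lemma inr_mem_subdivisionLift {A : Set V} (p : G.edgeSet × Fin s) :
    inr p ∈ subdivisionLift G s A := by
  simp [subdivisionLift]

lemma nat_card_edgeSet_prod_fin : Nat.card (G.edgeSet × Fin s) = s * G.edgeSet.ncard := by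
  rw [Nat.card_prod, Nat.card_coe_set_eq, Nat.card_fin, mul_comm]

lemma ncard_subdivisionLift [Finite V] (A : Set V) :
    (subdivisionLift G s A).ncard = A.ncard + s * G.edgeSet.ncard := by
  rw [Set.ncard_eq_ncard_preimage_inl_add, ← nat_card_edgeSet_prod_fin, ← Set.ncard_univ]
  congr 2 <;> ext <;> simp

variable [LinearOrder V]

/-- The `n`-th vertex on the path of `G.subdivision s` replacing `e`, from `e.inf'` at `n = 0` to
`e.sup'` at `n = s + 1` (and beyond). -/
def subdivisionVertex (s : ℕ) (e : G.edgeSet) (n : ℕ) : V ⊕ (G.edgeSet × Fin s) :=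
  if h₀ : n = 0 then inl e.1.inf'
  else if h : n ≤ s then inr (e, ⟨n - 1, by omega⟩)
  else inl e.1.sup'

@[simp] lemma subdivisionVertex_zero (e : G.edgeSet) :
    subdivisionVertex s e 0 = inl e.1.inf' := rfl

lemma subdivisionVertex_succ (e : G.edgeSet) (i : Fin s) :
    subdivisionVertex s e (i + 1) = inr (e, i) := by
  simp [subdivisionVertex, Nat.succ_le_of_lt i.2]

lemma subdivisionVertex_of_lt (e : G.edgeSet) {n : ℕ} (h : s < n) :
    subdivisionVertex s e n = inl e.1.sup' := by
  simp [subdivisionVertex, Nat.not_le.2 h, Nat.ne_zero_of_lt h]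

lemma subdivisionVertex_cases (e : G.edgeSet) (n : ℕ) :
    subdivisionVertex s e n = inl e.1.inf' ∨ (∃ i, subdivisionVertex s e n = inr (e, i)) ∨
      subdivisionVertex s e n = inl e.1.sup' := by
  unfold subdivisionVertex
  split_ifs <;> simp

lemma subdivision_adj_subdivisionVertex (hs : 1 ≤ s) (e : G.edgeSet) {n : ℕ} (hn : n ≤ s) :
    (G.subdivision s).Adj (subdivisionVertex s e n) (subdivisionVertex s e (n + 1)) := by
  simp only [subdivisionVertex, subdivision, fromRel_adj]
  split_ifs <;> simp_all <;> omega

lemma exists_subdivisionVertex_of_adj {x y : V ⊕ (G.edgeSet × Fin s)}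
    (h : (G.subdivision s).Adj x y) : ∃ e n, n ≤ s ∧
      s(x, y) = s(subdivisionVertex s e n, subdivisionVertex s e (n + 1)) := by
  have hinl : ∀ (u : V) (f : G.edgeSet) (j : Fin s),
      (u = f.1.inf' ∧ (j : ℕ) = 0 ∨ u = f.1.sup' ∧ (j : ℕ) = s - 1) → ∃ e n, n ≤ s ∧
        s(inl u, inr (f, j)) = s(subdivisionVertex s e n, subdivisionVertex s e (n + 1)) := by
    rintro u f j (⟨rfl, hj⟩ | ⟨rfl, hj⟩)
    · refine ⟨f, j, j.2.le, ?_⟩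
      rw [subdivisionVertex_succ, hj, subdivisionVertex_zero]
    · refine ⟨f, j + 1, j.2, ?_⟩
      rw [subdivisionVertex_succ, subdivisionVertex_of_lt f (by omega), Sym2.eq_swap]
  have hinr : ∀ (e : G.edgeSet) (i j : Fin s), (i : ℕ) + 1 = j → ∃ f n, n ≤ s ∧
      s(inr (e, i), inr (e, j)) = s(subdivisionVertex s f n, subdivisionVertex s f (n + 1)) := by
    intro e i j hij
    refine ⟨e, i + 1, i.2, ?_⟩
    rw [subdivisionVertex_succ, hij, subdivisionVertex_succ]
  rcases x with u | ⟨e, i⟩ <;> rcases y with v | ⟨f, j⟩ <;>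
    simp only [subdivision, fromRel_adj, ne_eq, reduceCtorEq, not_false_eq_true, or_false,
      false_or, true_and, and_false, or_self] at h
  · exact hinl u f j h
  · rw [Sym2.eq_swap]
    exact hinl v e i h
  · obtain ⟨-, ⟨rfl, hij⟩ | ⟨rfl, hij⟩⟩ := h
    · exact hinr _ i j hij
    · rw [Sym2.eq_swap]
      exact hinr _ j i hij

lemma subdivisionVertex_injOn (e : G.edgeSet) :
    Set.InjOn (subdivisionVertex s e) (Set.Iic (s + 1)) := by
  intro n hn m hm h
  have := (adj_inf'_sup' e.2).ne
  simp only [Set.mem_Iic] at hn hm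
  simp only [subdivisionVertex] at h
  split_ifs at h <;> simp_all <;> omega

lemma eq_of_subdivisionVertex_eq_inr {e f : G.edgeSet} {n : ℕ} {i : Fin s}
    (h : subdivisionVertex s e n = inr (f, i)) : e = f := by
  simp only [subdivisionVertex] at h
  split_ifs at h
  exact congrArg Prod.fst (inr_injective h)

lemma subdivisionVertex_edge_inj (hs : 1 ≤ s) {e f : G.edgeSet} {n m : ℕ} (hn : n ≤ s)
    (hm : m ≤ s)
    (h : s(subdivisionVertex s e n, subdivisionVertex s e (n + 1)) =
      s(subdivisionVertex s f m, subdivisionVertex s f (m + 1))) : e = f ∧ n = m := by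
  obtain ⟨i, hi⟩ : ∃ i : Fin s,
      inr (e, i) ∈ s(subdivisionVertex s e n, subdivisionVertex s e (n + 1)) := by
    rcases n with _ | k
    · exact ⟨⟨0, hs⟩, by rw [subdivisionVertex_succ e ⟨0, hs⟩]; exact Sym2.mem_mk_right _ _⟩
    · exact ⟨⟨k, hn⟩, by rw [subdivisionVertex_succ e ⟨k, hn⟩]; exact Sym2.mem_mk_left _ _⟩
  rw [h, Sym2.mem_iff] at hi
  obtain rfl : e = f := by
    rcases hi with hi | hi <;> exact (eq_of_subdivisionVertex_eq_inr hi.symm).symm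
  have hinj := subdivisionVertex_injOn (s := s) e
  refine ⟨rfl, ?_⟩
  rcases Sym2.eq_iff.1 h with ⟨h1, -⟩ | ⟨h1, h2⟩
  · exact hinj (by simp; omega) (by simp; omega) h1
  · have := hinj (by simp; omega) (by simp; omega) h1
    have := hinj (by simp; omega) (by simp; omega) h2
    omega

open Classical in
/-- Collapses the path of `e₀` onto its ends, cut between positions `n₀` and `n₀ + 1`, and the path
of any other edge onto one end, lying in `A` if possible. -/
noncomputable def subdivisionCollapse (A : Set V) (e₀ : G.edgeSet) (n₀ : ℕ) :
    V ⊕ (G.edgeSet × Fin s) → V :=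
  Sum.elim id fun p =>
    if p.1 = e₀ then (if (p.2 : ℕ) < n₀ then e₀.1.inf' else e₀.1.sup')
    else if p.1.1.inf' ∈ A then p.1.1.inf' else p.1.1.sup'

lemma subdivisionCollapse_self {A : Set V} {e₀ : G.edgeSet} {n₀ : ℕ} (hn₀ : n₀ ≤ s) (n : ℕ) :
    subdivisionCollapse A e₀ n₀ (subdivisionVertex s e₀ n) =
      if n ≤ n₀ then e₀.1.inf' else e₀.1.sup' := by
  simp only [subdivisionVertex, subdivisionCollapse]
  split_ifs <;> simp_all <;> omega

lemma reachable_subdivisionCollapse_of_ne {A : Set V} {e₀ f : G.edgeSet} (hf : f ≠ e₀) (n₀ : ℕ)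
    {n m : ℕ} (hn : subdivisionVertex s f n ∈ subdivisionLift G s A)
    (hm : subdivisionVertex s f m ∈ subdivisionLift G s A) :
    ((G.spanningInduce A).deleteEdges {e₀.1}).Reachable
      (subdivisionCollapse A e₀ n₀ (subdivisionVertex s f n))
      (subdivisionCollapse A e₀ n₀ (subdivisionVertex s f m)) := by
  classical
  have hfe : f.1 ≠ e₀.1 := fun h => hf (Subtype.ext h)
  have key : ∀ k, subdivisionVertex s f k ∈ subdivisionLift G s A →
      ((G.spanningInduce A).deleteEdges {e₀.1}).Reachable
        (subdivisionCollapse A e₀ n₀ (subdivisionVertex s f k))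
        (if f.1.inf' ∈ A then f.1.inf' else f.1.sup') := by
    intro k hk
    rcases subdivisionVertex_cases f k with h | ⟨i, h⟩ | h <;> rw [h] at hk ⊢
    · rw [inl_mem_subdivisionLift] at hk
      simp [subdivisionCollapse, hk]
    · simp [subdivisionCollapse, hf]
    · rw [inl_mem_subdivisionLift] at hk
      simp only [subdivisionCollapse, elim_inl, id_eq]
      split_ifs with hinf
      · refine Adj.reachable (deleteEdges_adj.2 ⟨?_, ?_⟩)
        · exact spanningInduce_adj.2 ⟨(adj_inf'_sup' f.2).symm, hk, hinf⟩
        · rwa [Set.mem_singleton_iff, Sym2.eq_swap, Sym2.mk_inf'_sup']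
      · rfl
  exact (key n hn).trans (key m hm).symm

theorem IsAcyclic.spanningInduce_subdivisionLift {A : Set V}
    (hA : (G.spanningInduce A).IsAcyclic) :
    ((G.subdivision s).spanningInduce (subdivisionLift G s A)).IsAcyclic := by
  rw [isAcyclic_iff_forall_adj_isBridge]
  intro x y hxy
  obtain ⟨e₀, n₀, hn₀, hedge⟩ := exists_subdivisionVertex_of_adj (spanningInduce_adj.1 hxy).1
  rw [hedge, isBridge_iff]
  intro hr
  apply hA.not_reachable_deleteEdges (adj_inf'_sup' e₀.2)
  rw [Sym2.mk_inf'_sup']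
  have hcut : ∀ n, n ≠ n₀ → subdivisionCollapse A e₀ n₀ (subdivisionVertex s e₀ n) =
      subdivisionCollapse A e₀ n₀ (subdivisionVertex s e₀ (n + 1)) := by
    intro n hn
    simp only [subdivisionCollapse_self hn₀]
    split_ifs <;> first | rfl | omega
  have hstep : ∀ a b,
      (((G.subdivision s).spanningInduce (subdivisionLift G s A)).deleteEdges
        {s(subdivisionVertex s e₀ n₀, subdivisionVertex s e₀ (n₀ + 1))}).Adj a b →
      ((G.spanningInduce A).deleteEdges {e₀.1}).Reachable
        (subdivisionCollapse A e₀ n₀ a) (subdivisionCollapse A e₀ n₀ b) := by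
    intro a b hab
    obtain ⟨hab, hne⟩ := deleteEdges_adj.1 hab
    obtain ⟨hab, ha, hb⟩ := spanningInduce_adj.1 hab
    obtain ⟨f, n, -, hf⟩ := exists_subdivisionVertex_of_adj hab
    rcases Sym2.eq_iff.1 hf with ⟨rfl, rfl⟩ | ⟨rfl, rfl⟩
    all_goals
      by_cases hfe : f = e₀
      · subst hfe
        have hn : n ≠ n₀ := by rintro rfl; exact hne (by rw [hf]; rfl)
        rw [hcut n hn]
      · exact reachable_subdivisionCollapse_of_ne hfe n₀ ‹_› ‹_›
  simpa [subdivisionCollapse_self hn₀] using hr.lift _ hstep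

def subdivisionBase (B : Set (V ⊕ (G.edgeSet × Fin s))) : Set V :=
  {u | inl u ∈ B ∧ ∀ e : G.edgeSet, e.1.inf' = u → ∀ i, inr (e, i) ∈ B}

lemma subdivisionVertex_mem_of_mem_subdivisionBase {B : Set (V ⊕ (G.edgeSet × Fin s))}
    {f : G.edgeSet} (hinf : f.1.inf' ∈ subdivisionBase B) (hsup : f.1.sup' ∈ subdivisionBase B)
    (n : ℕ) : subdivisionVertex s f n ∈ B := by
  rcases subdivisionVertex_cases f n with h | ⟨i, h⟩ | h <;> rw [h]
  · exact hinf.1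
  · exact hinf.2 f rfl i
  · exact hsup.1

theorem IsAcyclic.spanningInduce_subdivisionBase (hs : 1 ≤ s)
    {B : Set (V ⊕ (G.edgeSet × Fin s))}
    (hB : ((G.subdivision s).spanningInduce B).IsAcyclic) :
    (G.spanningInduce (subdivisionBase B)).IsAcyclic := by
  set A := subdivisionBase B
  set H := (G.subdivision s).spanningInduce B
  have hmem : ∀ {c d x : V}, c ∈ A → d ∈ A → x ∈ s(c, d) → x ∈ A := by
    intro c d x hc hd hx
    rcases Sym2.mem_iff.1 hx with rfl | rfl <;> assumption
  rw [isAcyclic_iff_forall_adj_isBridge]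
  intro a b hab
  obtain ⟨hab, ha, hb⟩ := spanningInduce_adj.1 hab
  let e₀ : G.edgeSet := ⟨s(a, b), hab⟩
  have he₀ : ∀ n, subdivisionVertex s e₀ n ∈ B := subdivisionVertex_mem_of_mem_subdivisionBase
    (hmem ha hb (Sym2.inf'_mem _)) (hmem ha hb (Sym2.sup'_mem _))
  rw [← Sym2.mk_inf'_sup' s(a, b), isBridge_iff]
  intro hr
  have hD : H.Adj (subdivisionVertex s e₀ 0) (subdivisionVertex s e₀ 1) :=
    spanningInduce_adj.2 ⟨subdivision_adj_subdivisionVertex hs e₀ (Nat.zero_le s), he₀ 0, he₀ 1⟩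
  apply isBridge_iff.1 (isAcyclic_iff_forall_adj_isBridge.1 hB hD)
  set D := s(subdivisionVertex s e₀ 0, subdivisionVertex s e₀ 1)
  have hchain : ∀ f : G.edgeSet, (∀ n, subdivisionVertex s f n ∈ B) → ∀ i ≤ s + 1,
      (f ≠ e₀ ∨ 1 ≤ i) →
      (H.deleteEdges {D}).Reachable (subdivisionVertex s f i) (subdivisionVertex s f (s + 1)) := by
    intro f hf i hi hfi
    refine reachable_of_adj_succ hi fun n hin hns => deleteEdges_adj.2 ⟨spanningInduce_adj.2
      ⟨subdivision_adj_subdivisionVertex hs f (by omega), hf n, hf (n + 1)⟩, fun hnD => ?_⟩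
    obtain ⟨rfl, rfl⟩ :=
      subdivisionVertex_edge_inj hs (by omega) (Nat.zero_le s) (Set.mem_singleton_iff.1 hnD)
    simp at hfi
    omega
  have hlift : (H.deleteEdges {D}).Reachable (inl e₀.1.inf') (inl e₀.1.sup') := by
    refine hr.lift (T := H.deleteEdges {D}) inl fun c d hcd => ?_
    obtain ⟨hcd, hne⟩ := deleteEdges_adj.1 hcd
    obtain ⟨hcd, hc, hd⟩ := spanningInduce_adj.1 hcd
    let f : G.edgeSet := ⟨s(c, d), hcd⟩
    have hfe : f ≠ e₀ := fun h => hne <| by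
      rw [Set.mem_singleton_iff, Sym2.mk_inf'_sup']
      exact congrArg Subtype.val h
    have := hchain f (subdivisionVertex_mem_of_mem_subdivisionBase
      (hmem hc hd (Sym2.inf'_mem _)) (hmem hc hd (Sym2.sup'_mem _))) 0 (by omega) (Or.inl hfe)
    rw [subdivisionVertex_zero, subdivisionVertex_of_lt f (by omega)] at this
    change (H.deleteEdges {D}).Reachable (inl s(c, d).inf') (inl s(c, d).sup') at this
    rcases Sym2.eq_iff.1 (Sym2.mk_inf'_sup' s(c, d)) with ⟨h1, h2⟩ | ⟨h1, h2⟩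
    · rwa [h1, h2] at this
    · rw [h1, h2] at this
      exact this.symm
  have hback := hchain e₀ he₀ 1 (by omega) (Or.inr le_rfl)
  rw [subdivisionVertex_of_lt e₀ (n := s + 1) (by omega)] at hback
  exact hlift.trans hback.symm

lemma ncard_le_ncard_subdivisionBase_add [Finite V] (B : Set (V ⊕ (G.edgeSet × Fin s))) :
    B.ncard ≤ (subdivisionBase B).ncard + s * G.edgeSet.ncard := by
  have hmissing : inl ⁻¹' B \ subdivisionBase B ⊆ (fun p => p.1.1.inf') '' (inr ⁻¹' B)ᶜ := by
    rintro u ⟨hu, hnot⟩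
    simp only [subdivisionBase, Set.mem_ofPred_eq, not_and, not_forall] at hnot
    obtain ⟨e, he, i, hi⟩ := hnot hu
    exact ⟨(e, i), hi, he⟩
  have h₁ := Set.ncard_le_ncard_sdiff_add_ncard (inl ⁻¹' B) (subdivisionBase B)
  have h₂ := (Set.ncard_le_ncard hmissing).trans (Set.ncard_image_le (Set.toFinite _))
  have h₃ := Set.ncard_add_ncard_compl (inr ⁻¹' B)
  rw [nat_card_edgeSet_prod_fin] at h₃
  rw [Set.ncard_eq_ncard_preimage_inl_add B]
  omega

end SimpleGraph

/-- Let `G` be a finite simple graph with `n` vertices and `m` edges, `s ≥ 1`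
an integer, and `G*` the `s`-subdivision of `G`, which has `N = n + s·m` vertices.  Then for
every integer `k ≥ 0`, `G` has an induced forest on `n - k` vertices if and only if `G*` has an
induced forest on `N - k` vertices. -/
theorem stmt10 {V : Type*} [Fintype V] [LinearOrder V]
    (G : SimpleGraph V) [DecidableRel G.Adj] (s : ℕ) (hs : 1 ≤ s) :
    Fintype.card (V ⊕ (G.edgeSet × Fin s)) = Fintype.card V + s * G.edgeSet.ncard ∧
      ∀ k : ℕ,
        (∃ A : Set V, A.ncard = Fintype.card V - k ∧ (G.induce A).IsAcyclic) ↔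
          ∃ B : Set (V ⊕ (G.edgeSet × Fin s)),
            B.ncard = Fintype.card V + s * G.edgeSet.ncard - k ∧
            ((G.subdivision s).induce B).IsAcyclic := by
  refine ⟨?_, fun k => ⟨?_, ?_⟩⟩
  · rw [Fintype.card_sum, ← Nat.card_eq_fintype_card (α := G.edgeSet × Fin s),
      nat_card_edgeSet_prod_fin]
  · rintro ⟨A, hA, hAc⟩
    have hB := (isAcyclic_spanningInduce_iff.2 hAc).spanningInduce_subdivisionLift (s := s)
    refine (isAcyclic_spanningInduce_iff.1 hB).exists_induce_ncard_eq ?_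
    rw [ncard_subdivisionLift, hA]
    omega
  · rintro ⟨B, hB, hBc⟩
    have hA := (isAcyclic_spanningInduce_iff.2 hBc).spanningInduce_subdivisionBase hs
    refine (isAcyclic_spanningInduce_iff.1 hA).exists_induce_ncard_eq ?_
    have := ncard_le_ncard_subdivisionBase_add B
    omega
end
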